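/- arXiv:2506.19810 — 3 statements merged into one kernel-verified Lean document; each statement's English description precedes it below -/
import Mathlib

section
/- For any Y-lattice Λ (a family of subsets of a finite set Y containing Y and closed under pairwise intersections), the pivot dimension PD(Λ) is at most the VC dimension of Λ. Here PD(Λ) = max over A ∈ Λ of the minimal cardinality of a subset B ⊆ A such that A is contained in the Λ-hull of B, where the Λ-hull of B is the intersection of all elements of Λ containing B. -/
/-- A `Y`-lattice: a family of subsets of `Y` containing `Y` itself and closed
under binary intersections. -/
def IsYLattice {Y : Type} (L : Set (Set Y)) : Prop :=
  Set.univ ∈ L ∧ ∀ A ∈ L, ∀ B ∈ L, A ∩ B ∈ L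

/-- The `Λ`-hull of `A`: the intersection of all members of `Λ` containing `A`. -/
def latHull {Y : Type} (L : Set (Set Y)) (A : Set Y) : Set Y :=
  ⋂₀ {B | B ∈ L ∧ A ⊆ B}

/-- The `Λ`-complexity of `A`: minimal cardinality of `B ⊆ A` with `A ⊆ hull(B)`. -/
noncomputable def latComplexity {Y : Type} (L : Set (Set Y)) (A : Set Y) : ℕ :=
  sInf {n : ℕ | ∃ B : Set Y, B ⊆ A ∧ B.ncard = n ∧ A ⊆ latHull L B}

/-- The pivot dimension of `Λ`: maximal `Λ`-complexity of an element of `Λ`. -/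
noncomputable def PDim {Y : Type} (L : Set (Set Y)) : ℕ :=
  sSup {n : ℕ | ∃ A ∈ L, n = latComplexity L A}

/-- `Λ` shatters `S` if every subset of `S` is a trace `S ∩ C` for some `C ∈ Λ`. -/
def Shatters {Y : Type} (L : Set (Set Y)) (S : Set Y) : Prop :=
  ∀ B ⊆ S, ∃ C ∈ L, S ∩ C = B

/-- VC dimension of the family `Λ`. -/
noncomputable def VCdim {Y : Type} (L : Set (Set Y)) : ℕ :=
  sSup {n : ℕ | ∃ S : Set Y, Shatters L S ∧ S.ncard = n}

/-- `Λ(H)`: the minimal `Y`-lattice containing every value `h x` for `h ∈ H`. -/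
def LamH {X Y : Type} (H : Set (X → Set Y)) : Set (Set Y) :=
  {A | ∀ L : Set (Set Y), IsYLattice L → (∀ h ∈ H, ∀ x : X, h x ∈ L) → A ∈ L}

/-! A set `B ⊆ A` of minimal size with `A ⊆ hull B` is independent: a point of `B` lying in the
hull of the other points could be dropped. An independent `B` is shattered by `Λ`, because for
every `B' ⊆ B` the trace of `hull B'` on `B` is exactly `B'`. -/

section LatticeHull

variable {Y : Type} {L : Set (Set Y)}

lemma subset_latHull (A : Set Y) : A ⊆ latHull L A :=
  fun _ hx _ hC => hC.2 hx

lemma latHull_mono {A B : Set Y} (h : A ⊆ B) : latHull L A ⊆ latHull L B :=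
  fun _ hx C hC => hx C ⟨hC.1, h.trans hC.2⟩

lemma latHull_subset {A C : Set Y} (hC : C ∈ L) (h : A ⊆ C) : latHull L A ⊆ C :=
  Set.sInter_subset_of_mem ⟨hC, h⟩

lemma latHull_subset_latHull_of_subset_latHull {A B : Set Y} (h : A ⊆ latHull L B) :
    latHull L A ⊆ latHull L B :=
  fun _ hx C hC => hx C ⟨hC.1, h.trans (latHull_subset hC.1 hC.2)⟩

lemma IsYLattice.finiteInter (hL : IsYLattice L) : FiniteInter L :=
  ⟨hL.1, fun A hA B hB => hL.2 A hA B hB⟩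

lemma latHull_mem [Finite Y] (hL : IsYLattice L) (A : Set Y) : latHull L A ∈ L := by
  have hfin : {B | B ∈ L ∧ A ⊆ B}.Finite := Set.toFinite _
  simpa [latHull] using
    hL.finiteInter.finiteInter_mem hfin.toFinset (by simp +contextual [Set.subset_def])

def IsHullIndependent (L : Set (Set Y)) (B : Set Y) : Prop :=
  ∀ x ∈ B, x ∉ latHull L (B \ {x})

lemma IsHullIndependent.shatters [Finite Y] (hL : IsYLattice L) {B : Set Y}
    (hB : IsHullIndependent L B) : Shatters L B := by
  intro B' hB'
  refine ⟨latHull L B', latHull_mem hL B',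
    Set.Subset.antisymm ?_ fun x hx => ⟨hB' hx, subset_latHull B' hx⟩⟩
  rintro x ⟨hxB, hxHull⟩
  by_contra hxB'
  have hB'_sub : B' ⊆ B \ {x} := fun y hy => ⟨hB' hy, fun hyx => hxB' (hyx ▸ hy)⟩
  exact hB x hxB (latHull_mono hB'_sub hxHull)

lemma latComplexity_le_ncard {A B : Set Y} (hBA : B ⊆ A) (hAB : A ⊆ latHull L B) :
    latComplexity L A ≤ B.ncard :=
  Nat.sInf_le ⟨B, hBA, rfl, hAB⟩

lemma exists_ncard_eq_latComplexity (L : Set (Set Y)) (A : Set Y) :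
    ∃ B ⊆ A, B.ncard = latComplexity L A ∧ A ⊆ latHull L B :=
  Nat.sInf_mem (s := {n | ∃ B ⊆ A, B.ncard = n ∧ A ⊆ latHull L B})
    ⟨A.ncard, A, subset_rfl, rfl, subset_latHull A⟩

lemma isHullIndependent_of_ncard_eq_latComplexity {A B : Set Y} (hB : B.Finite) (hBA : B ⊆ A)
    (hcard : B.ncard = latComplexity L A) (hAB : A ⊆ latHull L B) : IsHullIndependent L B := by
  intro x hxB hxHull
  have hB_sub : B ⊆ latHull L (B \ {x}) := fun y hy => by
    by_cases hyx : y = x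
    · exact hyx ▸ hxHull
    · exact subset_latHull _ ⟨hy, hyx⟩
  have hA_sub : A ⊆ latHull L (B \ {x}) :=
    hAB.trans (latHull_subset_latHull_of_subset_latHull hB_sub)
  have hle := latComplexity_le_ncard (Set.sdiff_subset.trans hBA) hA_sub
  have hlt := Set.ncard_sdiff_singleton_lt_of_mem hxB hB
  omega

lemma ncard_le_VCdim [Finite Y] {S : Set Y} (hS : Shatters L S) : S.ncard ≤ VCdim L := by
  have hbdd : BddAbove {n : ℕ | ∃ S : Set Y, Shatters L S ∧ S.ncard = n} := by
    refine ⟨Nat.card Y, ?_⟩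
    rintro _ ⟨T, -, rfl⟩
    exact Set.ncard_le_card T
  exact le_csSup hbdd ⟨S, hS, rfl⟩

lemma latComplexity_le_VCdim [Finite Y] (hL : IsYLattice L) (A : Set Y) :
    latComplexity L A ≤ VCdim L := by
  obtain ⟨B, hBA, hcard, hAB⟩ := exists_ncard_eq_latComplexity L A
  have hB : IsHullIndependent L B :=
    isHullIndependent_of_ncard_eq_latComplexity (Set.toFinite B) hBA hcard hAB
  exact hcard ▸ ncard_le_VCdim (hB.shatters hL)

end LatticeHull

/-- For any `Y`-lattice `Λ` on a finite set `Y`, the pivot dimension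
of `Λ` is at most its VC dimension. -/
theorem pivotDim_le_vcDim {Y : Type} [Fintype Y] (L : Set (Set Y))
    (hL : IsYLattice L) : PDim L ≤ VCdim L :=
  csSup_le' <| by
    rintro _ ⟨A, -, rfl⟩
    exact latComplexity_le_VCdim hL A
end

section
/- For any nonempty finite hypothesis class H of functions from a domain X to subsets of a finite label set Y (with each hypothesis nonempty somewhere), the ambiguous Littlestone dimension of H is at most |H| − 1. That is, every ambiguous shattered H-tree has rank at most |H| − 1. -/
/-- A finite rooted tree: vertices, a root, and a parent map under which every
vertex reaches the root. -/
structure RTree where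
  V : Type
  [fin : Fintype V]
  root : V
  parent : V → V
  parent_root : parent root = root
  reaches : ∀ v : V, ∃ k : ℕ, parent^[k] v = root

namespace RTree

/-- Children of a vertex (the root is not a child of anything). -/
def children (t : RTree) (v : t.V) : Set t.V := {w | t.parent w = v ∧ w ≠ t.root}

def IsLeaf (t : RTree) (v : t.V) : Prop := t.children v = ∅

/-- `a` is an ancestor (or equal to) `u`. -/
def Anc (t : RTree) (a u : t.V) : Prop := ∃ k : ℕ, t.parent^[k] u = a

noncomputable def depthOf (t : RTree) (v : t.V) : ℕ := sInf {k : ℕ | t.parent^[k] v = t.root}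

noncomputable def depth (t : RTree) : ℕ := sSup {n : ℕ | ∃ v : t.V, n = t.depthOf v}

end RTree

/-- An ambiguous shattered `H`-tree: internal vertices carry instances, non-root
vertices (identified with the edges to their parents) carry labels, distinct among
siblings, leaves carry hypotheses from `H` compatible with all edge labels above
them, and `E0` selects exactly one child edge of each internal vertex. -/
structure AmbTree (X Y : Type) (H : Set (X → Set Y)) where
  t : RTree
  xlab : t.V → X
  ylab : t.V → Y
  hlab : t.V → (X → Set Y)
  E0 : Set t.V
  e0_ne_root : ∀ a ∈ E0, a ≠ t.root
  e0_unique : ∀ v : t.V, (t.children v).Nonempty → ∃! a : t.V, a ∈ t.children v ∩ E0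
  sib_distinct : ∀ a b : t.V, a ≠ t.root → b ≠ t.root →
    t.parent a = t.parent b → a ≠ b → ylab a ≠ ylab b
  hlab_mem : ∀ u : t.V, t.IsLeaf u → hlab u ∈ H
  path_mem : ∀ u a : t.V, t.IsLeaf u → t.Anc a u → a ≠ t.root →
    ylab a ∈ hlab u (xlab (t.parent a))

namespace AmbTree

variable {X Y : Type} {H : Set (X → Set Y)}

/-- Edge `a` (on the root-to-`u` path) is relevant to leaf `u`. -/
def Relevant (T : AmbTree X Y H) (a u : T.t.V) : Prop :=
  a ≠ T.t.root ∧ T.t.Anc a u ∧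
    (a ∉ T.E0 ∨ ∃ b : T.t.V, T.t.parent b = T.t.parent a ∧ b ≠ T.t.root ∧
      T.ylab b ∉ T.hlab u (T.xlab (T.t.parent a)))

noncomputable def relCount (T : AmbTree X Y H) (u : T.t.V) : ℕ :=
  {a : T.t.V | T.Relevant a u}.ncard

/-- Rank: the minimum over leaves of the number of relevant edges. -/
noncomputable def rank (T : AmbTree X Y H) : ℕ :=
  sInf {n : ℕ | ∃ u : T.t.V, T.t.IsLeaf u ∧ n = T.relCount u}

noncomputable def depth (T : AmbTree X Y H) : ℕ := T.t.depth

end AmbTree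

/-! Follow a greedy root-to-leaf path: at each internal vertex take a child edge that
rules out some hypothesis still consistent with the path, and the `E0` edge only when no
child edge rules anything out. Every edge relevant to the leaf `u` so reached then rules
out a hypothesis other than `h_u`, and since the version space only shrinks along the
path these hypotheses are distinct. -/

namespace RTree

variable {t : RTree}

theorem iterate_parent_root (k : ℕ) : t.parent^[k] t.root = t.root :=
  Function.iterate_fixed t.parent_root k

theorem Anc.refl (a : t.V) : t.Anc a a := ⟨0, rfl⟩

theorem Anc.trans {a b c : t.V} (hab : t.Anc a b) (hbc : t.Anc b c) : t.Anc a c := by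
  obtain ⟨k, rfl⟩ := hab
  obtain ⟨l, rfl⟩ := hbc
  exact ⟨k + l, Function.iterate_add_apply _ _ _ _⟩

theorem anc_parent (a : t.V) : t.Anc (t.parent a) a := ⟨1, rfl⟩

theorem Anc.eq_or_anc_parent {a b : t.V} (h : t.Anc a b) : a = b ∨ t.Anc a (t.parent b) := by
  obtain ⟨_ | k, rfl⟩ := h
  · exact Or.inl rfl
  · exact Or.inr ⟨k, (Function.iterate_succ_apply _ _ _).symm⟩

theorem Anc.total_of_anc {a b u : t.V} (ha : t.Anc a u) (hb : t.Anc b u) :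
    t.Anc a b ∨ t.Anc b a := by
  obtain ⟨k, rfl⟩ := ha
  obtain ⟨l, rfl⟩ := hb
  rcases le_total k l with h | h
  · exact Or.inr ⟨l - k, by rw [← Function.iterate_add_apply, Nat.sub_add_cancel h]⟩
  · exact Or.inl ⟨k - l, by rw [← Function.iterate_add_apply, Nat.sub_add_cancel h]⟩

theorem depthOf_parent_lt {w : t.V} (hw : w ≠ t.root) : t.depthOf (t.parent w) < t.depthOf w := by
  have hspec : t.parent^[t.depthOf w] w = t.root := Nat.sInf_mem (t.reaches w)
  obtain ⟨d, hd⟩ : ∃ d, t.depthOf w = d + 1 :=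
    Nat.exists_eq_succ_of_ne_zero fun h0 => hw (by rwa [h0] at hspec)
  rw [hd, Function.iterate_succ_apply] at hspec
  exact hd ▸ Nat.lt_succ_of_le (Nat.sInf_le hspec)

end RTree

namespace AmbTree

variable {X Y : Type} {H : Set (X → Set Y)} (T : AmbTree X Y H)

def versionSpace (v : T.t.V) : Set (X → Set Y) :=
  {g | g ∈ H ∧ ∀ a, T.t.Anc a v → a ≠ T.t.root → T.ylab a ∈ g (T.xlab (T.t.parent a))}

theorem versionSpace_anti {a b : T.t.V} (h : T.t.Anc a b) : T.versionSpace b ⊆ T.versionSpace a :=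
  fun _ hg => ⟨hg.1, fun c hc => hg.2 c (hc.trans h)⟩

theorem hlab_mem_versionSpace {u : T.t.V} (hu : T.t.IsLeaf u) : T.hlab u ∈ T.versionSpace u :=
  ⟨T.hlab_mem u hu, fun a ha => T.path_mem u a hu ha⟩

def Eliminates (a : T.t.V) : Prop :=
  ∃ g ∈ T.versionSpace (T.t.parent a), T.ylab a ∉ g (T.xlab (T.t.parent a))

def IsGreedy (a : T.t.V) : Prop :=
  T.Eliminates a ∨ (a ∈ T.E0 ∧ ∀ b ∈ T.t.children (T.t.parent a), ¬T.Eliminates b)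

def OnGreedyPath (v : T.t.V) : Prop :=
  ∀ a, T.t.Anc a v → a ≠ T.t.root → T.IsGreedy a

theorem notMem_versionSpace_of_ylab_notMem {a : T.t.V} (ha : a ≠ T.t.root) {g : X → Set Y}
    (hg : T.ylab a ∉ g (T.xlab (T.t.parent a))) : g ∉ T.versionSpace a :=
  fun hga => hg (hga.2 a (RTree.Anc.refl a) ha)

theorem exists_isGreedy_child {v : T.t.V} (hv : ¬T.t.IsLeaf v) :
    ∃ a ∈ T.t.children v, T.IsGreedy a := by
  by_cases h : ∃ a ∈ T.t.children v, T.Eliminates a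
  · obtain ⟨a, ha, hel⟩ := h
    exact ⟨a, ha, Or.inl hel⟩
  · obtain ⟨a, ⟨ha, ha0⟩, -⟩ := T.e0_unique v (Set.nonempty_iff_ne_empty.mpr hv)
    push Not at h
    refine ⟨a, ha, Or.inr ⟨ha0, ?_⟩⟩
    rw [ha.1]
    exact h

theorem onGreedyPath_root : T.OnGreedyPath T.t.root := by
  rintro a ⟨k, hk⟩ har
  exact absurd (hk ▸ RTree.iterate_parent_root k) har

variable {T} in
theorem OnGreedyPath.child {v a : T.t.V} (hv : T.OnGreedyPath v) (ha : a ∈ T.t.children v)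
    (hga : T.IsGreedy a) : T.OnGreedyPath a := by
  intro b hb hbr
  rcases hb.eq_or_anc_parent with rfl | hb
  · exact hga
  · exact hv b (ha.1 ▸ hb) hbr

/-- A vertex of maximal depth on the greedy path is a leaf. -/
theorem exists_leaf_onGreedyPath : ∃ u, T.t.IsLeaf u ∧ T.OnGreedyPath u := by
  have := T.t.fin
  obtain ⟨u, hu, hmax⟩ := Set.exists_max_image {v | T.OnGreedyPath v} T.t.depthOf
    (Set.toFinite _) ⟨_, T.onGreedyPath_root⟩
  refine ⟨u, by_contra fun hleaf => ?_, hu⟩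
  obtain ⟨a, ha, hga⟩ := T.exists_isGreedy_child hleaf
  have hdepth := RTree.depthOf_parent_lt ha.2
  rw [ha.1] at hdepth
  exact absurd (hmax a (hu.child ha hga)) (not_le.mpr hdepth)

variable {T} in
theorem Relevant.eliminates {a u : T.t.V} (hu : T.t.IsLeaf u) (hpath : T.OnGreedyPath u)
    (hrel : T.Relevant a u) : T.Eliminates a := by
  obtain ⟨har, hanc, hrel⟩ := hrel
  rcases hpath a hanc har with hel | ⟨ha0, hnone⟩
  · exact hel
  · exfalso
    obtain ⟨b, hbp, hbr, hb⟩ := hrel.resolve_left (not_not.mpr ha0)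
    have hhu : T.hlab u ∈ T.versionSpace (T.t.parent a) :=
      T.versionSpace_anti ((RTree.anc_parent a).trans hanc) (T.hlab_mem_versionSpace hu)
    exact hnone b ⟨hbp, hbr⟩ ⟨T.hlab u, hbp ▸ hhu, hbp ▸ hb⟩

theorem relCount_le_of_eliminates (hfin : H.Finite) {u : T.t.V} (hu : T.t.IsLeaf u)
    (helim : ∀ a, T.Relevant a u → T.Eliminates a) : T.relCount u ≤ H.ncard - 1 := by
  classical
  choose! w hwmem hwy using helim
  have hw_not_mem : ∀ a, T.Relevant a u → w a ∉ T.versionSpace a :=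
    fun a ha => T.notMem_versionSpace_of_ylab_notMem ha.1 (hwy a ha)
  have hmaps : ∀ a ∈ {a | T.Relevant a u}, w a ∈ H \ {T.hlab u} := by
    intro a ha
    refine ⟨(hwmem a ha).1, fun heq => hw_not_mem a ha ?_⟩
    rw [Set.mem_singleton_iff.mp heq]
    exact T.versionSpace_anti ha.2.1 (T.hlab_mem_versionSpace hu)
  have eq_of_anc : ∀ a b, T.Relevant a u → T.Relevant b u → T.t.Anc a b → w a = w b → a = b := by
    intro a b ha hb hab heq
    refine hab.eq_or_anc_parent.resolve_right fun habp => hw_not_mem a ha ?_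
    exact heq ▸ T.versionSpace_anti habp (hwmem b hb)
  have hinj : Set.InjOn w {a | T.Relevant a u} := by
    intro a ha b hb heq
    rcases ha.2.1.total_of_anc hb.2.1 with hab | hba
    · exact eq_of_anc a b ha hb hab heq
    · exact (eq_of_anc b a hb ha hba heq.symm).symm
  calc T.relCount u ≤ (H \ {T.hlab u}).ncard :=
        Set.ncard_le_ncard_of_injOn w hmaps hinj (hfin.subset Set.sdiff_subset)
    _ = H.ncard - 1 := Set.ncard_sdiff_singleton_of_mem (T.hlab_mem u hu)

end AmbTree

theorem rank_le_card_sub_one_general {X Y : Type} (H : Set (X → Set Y))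
    (hfin : H.Finite)
    (T : AmbTree X Y H) : T.rank ≤ H.ncard - 1 := by
  obtain ⟨u, hu, hpath⟩ := T.exists_leaf_onGreedyPath
  calc T.rank ≤ T.relCount u := Nat.sInf_le ⟨u, hu, rfl⟩
    _ ≤ H.ncard - 1 :=
      T.relCount_le_of_eliminates hfin hu fun _ hrel => hrel.eliminates hu hpath

/-- for a nonempty finite hypothesis class `H` (each hypothesis
nonempty somewhere), every ambiguous shattered `H`-tree has rank at most `|H| - 1`;
hence the ambiguous Littlestone dimension of `H` is at most `|H| - 1`. -/
theorem rank_le_card_sub_one {X Y : Type} [Fintype Y] (H : Set (X → Set Y))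
    (hfin : H.Finite) (hne : H.Nonempty)
    (hval : ∀ h ∈ H, ∃ x : X, (h x).Nonempty)
    (T : AmbTree X Y H) : T.rank ≤ H.ncard - 1 :=
  rank_le_card_sub_one_general H hfin T
end

section
/- Let T be a frugal ambiguous shattered H-tree, v* an internal vertex with instance label x*, and A the set of edge labels y_b of edges b on the root-to-v* path whose parent vertex has instance label x*. Then some child edge a of v* has label y_a outside the Λ(H)-hull of A, where Λ(H) is the minimal Y-lattice containing all values h(x) for h ∈ H, x ∈ X. -/
/-- A tree is frugal when every `E0`-edge is relevant to at least one leaf below it. -/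
def AmbTree.Frugal {X Y : Type} {H : Set (X → Set Y)} (T : AmbTree X Y H) : Prop :=
  ∀ a ∈ T.E0, ∃ u : T.t.V, T.t.IsLeaf u ∧ T.Relevant a u

/-! A frugal tree keeps its `E0`-child `a₀` of `v` only if some leaf `u` below `a₀` rejects a
sibling label: `y_b ∉ h_u(x_v)` for some child `b` of `v`. The set `h_u(x_v)` lies in `Λ(H)` and
contains every label on the path to `u` whose parent carries the instance `x_v`, so it contains
the `Λ(H)`-hull of `A`; hence `y_b` is outside that hull. -/

theorem latHull_subset_of_mem {Y : Type} {L : Set (Set Y)} {A B : Set Y} (hB : B ∈ L)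
    (hAB : A ⊆ B) : latHull L A ⊆ B :=
  Set.sInter_subset_of_mem ⟨hB, hAB⟩

theorem apply_mem_LamH {X Y : Type} {H : Set (X → Set Y)} {h : X → Set Y} (hh : h ∈ H)
    (x : X) : h x ∈ LamH H :=
  fun _ _ hL => hL h hh x

namespace RTree

variable {t : RTree}

theorem Anc.parent {a u : t.V} (h : t.Anc a u) : t.Anc (t.parent a) u :=
  Anc.trans ⟨1, rfl⟩ h

end RTree

namespace AmbTree

variable {X Y : Type} {H : Set (X → Set Y)}

theorem Frugal.exists_leaf_child_not_mem_hlab {T : AmbTree X Y H} (hfr : T.Frugal) {v : T.t.V}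
    (hv : ¬ T.t.IsLeaf v) :
    ∃ u b : T.t.V, T.t.IsLeaf u ∧ T.t.Anc v u ∧ b ≠ T.t.root ∧ T.t.parent b = v ∧
      T.ylab b ∉ T.hlab u (T.xlab v) := by
  obtain ⟨a₀, ⟨⟨rfl, -⟩, ha₀⟩, -⟩ := T.e0_unique v (Set.nonempty_iff_ne_empty.mpr hv)
  obtain ⟨u, hu, -, ha₀u, hrel⟩ := hfr a₀ ha₀
  obtain ⟨b, hb, hbr, hby⟩ := hrel.resolve_left (not_not_intro ha₀)
  exact ⟨u, b, hu, ha₀u.parent, hbr, hb, hby⟩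

variable (T : AmbTree X Y H)

def pathLabelsAt (v : T.t.V) (x : X) : Set Y :=
  {y | ∃ b : T.t.V, b ≠ T.t.root ∧ T.t.Anc b v ∧ T.xlab (T.t.parent b) = x ∧ y = T.ylab b}

theorem pathLabelsAt_subset_hlab {u v : T.t.V} (hu : T.t.IsLeaf u) (hvu : T.t.Anc v u)
    (x : X) : T.pathLabelsAt v x ⊆ T.hlab u x := by
  rintro _ ⟨b, hb, hbv, rfl, rfl⟩
  exact T.path_mem u b hu (hbv.trans hvu) hb

theorem latHull_pathLabelsAt_subset_hlab {u v : T.t.V} (hu : T.t.IsLeaf u)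
    (hvu : T.t.Anc v u) (x : X) : latHull (LamH H) (T.pathLabelsAt v x) ⊆ T.hlab u x :=
  latHull_subset_of_mem (apply_mem_LamH (T.hlab_mem u hu) x)
    (T.pathLabelsAt_subset_hlab hu hvu x)

end AmbTree

theorem frugal_repeated_instance_general {X Y : Type} (H : Set (X → Set Y))
    (T : AmbTree X Y H) (hfr : T.Frugal) (v : T.t.V) (hv : ¬ T.t.IsLeaf v) :
    ∃ a : T.t.V, a ≠ T.t.root ∧ T.t.parent a = v ∧
      T.ylab a ∉ latHull (LamH H)
        {y : Y | ∃ b : T.t.V, b ≠ T.t.root ∧ T.t.Anc b v ∧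
          T.xlab (T.t.parent b) = T.xlab v ∧ y = T.ylab b} := by
  obtain ⟨u, b, hu, hvu, hb, hbv, hby⟩ := hfr.exists_leaf_child_not_mem_hlab hv
  exact ⟨b, hb, hbv, fun hmem => hby (T.latHull_pathLabelsAt_subset_hlab hu hvu _ hmem)⟩

/-- in a frugal ambiguous shattered `H`-tree, for any internal vertex
`v*` with instance label `x*`, letting `A` be the set of labels of edges on the
root-to-`v*` path whose parent vertex carries the instance `x*`, some child edge of
`v*` has its label outside the `Λ(H)`-hull of `A`. -/
theorem frugal_repeated_instance {X Y : Type} [Fintype Y] (H : Set (X → Set Y))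
    (T : AmbTree X Y H) (hfr : T.Frugal) (v : T.t.V) (hv : ¬ T.t.IsLeaf v) :
    ∃ a : T.t.V, a ≠ T.t.root ∧ T.t.parent a = v ∧
      T.ylab a ∉ latHull (LamH H)
        {y : Y | ∃ b : T.t.V, b ≠ T.t.root ∧ T.t.Anc b v ∧
          T.xlab (T.t.parent b) = T.xlab v ∧ y = T.ylab b} :=
  frugal_repeated_instance_general H T hfr v hv
end
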